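/- The additive subgroup of the Lipschitz quaternions L spanned by all products a[b,c]d with a,b,c,d Hurwitz quaternions equals the set of integral linear combinations of the elements ±1±i, ±1±j, ±1±k, ±i±j, ±i±k, ±j±k, which is an index 2 sublattice of L. -/

import Mathlib

noncomputable section

def qi : Quaternion ℝ := ⟨0, 1, 0, 0⟩
def qj : Quaternion ℝ := ⟨0, 0, 1, 0⟩
def qk : Quaternion ℝ := ⟨0, 0, 0, 1⟩

/-- Membership in the Hurwitz order: all coefficients in `ℤ` or all in `ℤ + ½`. -/
def IsHurwitz (x : Quaternion ℝ) : Prop :=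
  (∃ a b c d : ℤ, x = ⟨(a : ℝ), (b : ℝ), (c : ℝ), (d : ℝ)⟩) ∨
  (∃ a b c d : ℤ, x = ⟨(a : ℝ) + 1/2, (b : ℝ) + 1/2, (c : ℝ) + 1/2, (d : ℝ) + 1/2⟩)

/-- The Lipschitz order `L = ℤ⟨1,i,j,k⟩` as an additive subgroup of `ℍ`. -/
def LipschitzLattice : AddSubgroup (Quaternion ℝ) :=
  AddSubgroup.closure {1, qi, qj, qk}

/-- The additive subgroup spanned by all products `a[b,c]d` with `a,b,c,d` Hurwitz. -/
def commProdLattice : AddSubgroup (Quaternion ℝ) :=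
  AddSubgroup.closure {x | ∃ a b c d : Quaternion ℝ,
    IsHurwitz a ∧ IsHurwitz b ∧ IsHurwitz c ∧ IsHurwitz d ∧
    x = a * (b * c - c * b) * d}

/-- The lattice of integral linear combinations of `±1±i, ±1±j, ±1±k, ±i±j, ±i±k, ±j±k`. -/
def evenLattice : AddSubgroup (Quaternion ℝ) :=
  AddSubgroup.closure {1 + qi, 1 - qi, 1 + qj, 1 - qj, 1 + qk, 1 - qk,
    qi + qj, qi - qj, qi + qk, qi - qk, qj + qk, qj - qk}

/-!
Reducing the coordinate sum mod 2 is a ring homomorphism `ℍ[ℤ] → ZMod 2` (it sends `i, j, k` to `1`),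
so its kernel, the even lattice `E`, is a two-sided ideal of index 2 in `L`, and it contains every
commutator in `L` because `ZMod 2` is commutative. A Hurwitz quaternion lies in `L` or in
`L + ω` with `ω = (1 + i + j + k)/2`, and multiplying the generators `1 + i, i + j, j + k, j - k`
of `E` by `ω` on either side gives elements of `E`; hence `H E H ⊆ E`. Also `[ω, x] ∈ E` for
`x ∈ L`, since `x` or `x - 1` lies in `E`, so all products `a[b,c]d` lie in `E`. Conversely
`[ω, i] = j - k` and `[ω, k] = i - j`, multiplied by `1`, `i` or `k`, give the four generators.
-/

open Quaternion

namespace Quaternion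

/- An anonymous constructor `⟨a, b, c, d⟩ : ℍ[R]` elaborates with type `ℍ[R,-1,0,-1]`, which the
`Quaternion` simp lemmas do not match. Hence `ofInt` gets its own projection lemmas, and `qi`, `ω`
are unfolded only after a first `simp` has pushed the projections through `+`, `*` and `•`. -/
def ofInt (x : ℍ[ℤ]) : ℍ[ℝ] := ⟨x.re, x.imI, x.imJ, x.imK⟩

@[simp] lemma re_ofInt (x : ℍ[ℤ]) : (ofInt x).re = x.re := rfl
@[simp] lemma imI_ofInt (x : ℍ[ℤ]) : (ofInt x).imI = x.imI := rfl
@[simp] lemma imJ_ofInt (x : ℍ[ℤ]) : (ofInt x).imJ = x.imJ := rfl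
@[simp] lemma imK_ofInt (x : ℍ[ℤ]) : (ofInt x).imK = x.imK := rfl

def ofIntHom : ℍ[ℤ] →+* ℍ[ℝ] where
  toFun := ofInt
  map_one' := by ext <;> simp
  map_zero' := by ext <;> simp
  map_add' x y := by ext <;> simp
  map_mul' x y := by ext <;> simp [re_mul, imI_mul, imJ_mul, imK_mul]

@[simp] lemma coe_ofIntHom : ⇑ofIntHom = ofInt := rfl

lemma ofIntHom_injective : Function.Injective ofIntHom := fun x y h => by
  obtain ⟨h₁, h₂, h₃, h₄⟩ := QuaternionAlgebra.mk.inj h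
  ext <;> assumption_mod_cast

def intI : ℍ[ℤ] := ⟨0, 1, 0, 0⟩
def intJ : ℍ[ℤ] := ⟨0, 0, 1, 0⟩
def intK : ℍ[ℤ] := ⟨0, 0, 0, 1⟩

lemma ofIntHom_intI : ofIntHom intI = qi := by ext <;> simp [qi] <;> rfl
lemma ofIntHom_intJ : ofIntHom intJ = qj := by ext <;> simp [qj] <;> rfl
lemma ofIntHom_intK : ofIntHom intK = qk := by ext <;> simp [qk] <;> rfl

/-- Multiplicative because `i, j, k ↦ 1` respects `i² = j² = k² = ijk = -1` in characteristic 2. -/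
def coordSumMod2 : ℍ[ℤ] →+* ZMod 2 where
  toFun x := x.re + x.imI + x.imJ + x.imK
  map_one' := by simp
  map_zero' := by simp
  map_add' x y := by simp only [re_add, imI_add, imJ_add, imK_add]; push_cast; ring
  map_mul' x y := by
    simp only [re_mul, imI_mul, imJ_mul, imK_mul]
    push_cast
    simp only [sub_eq_add_neg, ZMod.neg_eq_self_mod_two]
    ring

def evenCoordSum : AddSubgroup ℍ[ℤ] := (coordSumMod2 : ℍ[ℤ] →+ ZMod 2).ker

lemma mem_evenCoordSum_iff {z : ℍ[ℤ]} :
    z ∈ evenCoordSum ↔ Even (z.re + z.imI + z.imJ + z.imK) := by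
  rw [evenCoordSum, AddMonoidHom.mem_ker, ← ZMod.intCast_eq_zero_iff_even]
  simp [coordSumMod2]

lemma mul_mem_evenCoordSum_left (y : ℍ[ℤ]) {z : ℍ[ℤ]} (hz : z ∈ evenCoordSum) :
    y * z ∈ evenCoordSum := by
  simp_all [evenCoordSum]

lemma mul_mem_evenCoordSum_right {z : ℍ[ℤ]} (hz : z ∈ evenCoordSum) (y : ℍ[ℤ]) :
    z * y ∈ evenCoordSum := by
  simp_all [evenCoordSum]

lemma commutator_mem_evenCoordSum (y z : ℍ[ℤ]) : y * z - z * y ∈ evenCoordSum := by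
  simp [evenCoordSum, mul_comm]

lemma mem_evenCoordSum_or_sub_one_mem (y : ℍ[ℤ]) :
    y ∈ evenCoordSum ∨ y - 1 ∈ evenCoordSum := by
  have : ∀ a : ZMod 2, a = 0 ∨ a - 1 = 0 := by decide
  simpa [evenCoordSum] using this (coordSumMod2 y)

lemma index_evenCoordSum : evenCoordSum.index = 2 := by
  rw [evenCoordSum, AddSubgroup.index_ker, AddMonoidHom.range_eq_top.2 (ZMod.ringHom_surjective _)]
  simp

lemma map_evenCoordSum_le {G : AddSubgroup ℍ[ℝ]} (h₁ : 1 + qi ∈ G) (h₂ : qi + qj ∈ G)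
    (h₃ : qj + qk ∈ G) (h₄ : qj - qk ∈ G) : evenCoordSum.map (ofIntHom : ℍ[ℤ] →+ ℍ[ℝ]) ≤ G := by
  rintro _ ⟨z, hz, rfl⟩
  obtain ⟨m, hm⟩ := mem_evenCoordSum_iff.1 hz
  have hm' : (z.re : ℝ) + z.imI + z.imJ + z.imK = m + m := by exact_mod_cast hm
  have : ofIntHom z = z.re • (1 + qi) + (z.imI - z.re) • (qi + qj) + (m - z.imI) • (qj + qk)
      + (m - z.imI - z.imK) • (qj - qk) := by
    ext <;> simp <;> simp [qi, qj, qk]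
    linarith
  rw [AddMonoidHom.coe_coe, this]
  exact add_mem (add_mem (add_mem (zsmul_mem h₁ _) (zsmul_mem h₂ _)) (zsmul_mem h₃ _))
    (zsmul_mem h₄ _)

end Quaternion

lemma lipschitzLattice_eq_map :
    LipschitzLattice = (⊤ : AddSubgroup ℍ[ℤ]).map (ofIntHom : ℍ[ℤ] →+ ℍ[ℝ]) := by
  apply le_antisymm
  · rw [LipschitzLattice, AddSubgroup.closure_le]
    rintro _ (rfl | rfl | rfl | rfl)
    exacts [⟨1, trivial, map_one ofIntHom⟩, ⟨intI, trivial, ofIntHom_intI⟩,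
      ⟨intJ, trivial, ofIntHom_intJ⟩, ⟨intK, trivial, ofIntHom_intK⟩]
  · rintro _ ⟨y, -, rfl⟩
    have : ofIntHom y = y.re • 1 + y.imI • qi + y.imJ • qj + y.imK • qk := by
      ext <;> simp <;> simp [qi, qj, qk]
    rw [AddMonoidHom.coe_coe, this]
    have mem {x} (hx : x ∈ ({1, qi, qj, qk} : Set ℍ[ℝ])) (n : ℤ) : n • x ∈ LipschitzLattice :=
      zsmul_mem (AddSubgroup.subset_closure hx) n
    exact add_mem (add_mem (add_mem (mem (by simp) _) (mem (by simp) _)) (mem (by simp) _))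
      (mem (by simp) _)

lemma evenLattice_eq_map : evenLattice = evenCoordSum.map (ofIntHom : ℍ[ℤ] →+ ℍ[ℝ]) := by
  apply le_antisymm
  · rw [evenLattice, AddSubgroup.closure_le]
    simp only [Set.insert_subset_iff, Set.singleton_subset_iff, SetLike.mem_coe,
      ← ofIntHom_intI, ← ofIntHom_intJ, ← ofIntHom_intK, ← map_one ofIntHom, ← map_add, ← map_sub]
    refine ⟨?_, ?_, ?_, ?_, ?_, ?_, ?_, ?_, ?_, ?_, ?_, ?_⟩ <;>
      exact AddSubgroup.mem_map_of_mem _ (mem_evenCoordSum_iff.2 (by decide))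
  · apply map_evenCoordSum_le <;> exact AddSubgroup.subset_closure (by simp)

lemma mem_lipschitzLattice_iff {x : ℍ[ℝ]} : x ∈ LipschitzLattice ↔ ∃ y, ofIntHom y = x := by
  simp [lipschitzLattice_eq_map]

lemma mem_evenLattice_iff {x : ℍ[ℝ]} :
    x ∈ evenLattice ↔ ∃ z ∈ evenCoordSum, ofIntHom z = x := by
  simp [evenLattice_eq_map]

lemma mul_mem_evenLattice_of_mem_lipschitzLattice {y x : ℍ[ℝ]} (hy : y ∈ LipschitzLattice)
    (hx : x ∈ evenLattice) : y * x ∈ evenLattice ∧ x * y ∈ evenLattice := by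
  obtain ⟨y, rfl⟩ := mem_lipschitzLattice_iff.1 hy
  obtain ⟨z, hz, rfl⟩ := mem_evenLattice_iff.1 hx
  exact ⟨mem_evenLattice_iff.2 ⟨_, mul_mem_evenCoordSum_left y hz, map_mul ..⟩,
    mem_evenLattice_iff.2 ⟨_, mul_mem_evenCoordSum_right hz y, map_mul ..⟩⟩

lemma commutator_mem_evenLattice_of_mem_lipschitzLattice {x y : ℍ[ℝ]}
    (hx : x ∈ LipschitzLattice) (hy : y ∈ LipschitzLattice) : x * y - y * x ∈ evenLattice := by
  obtain ⟨x, rfl⟩ := mem_lipschitzLattice_iff.1 hx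
  obtain ⟨y, rfl⟩ := mem_lipschitzLattice_iff.1 hy
  exact mem_evenLattice_iff.2 ⟨_, commutator_mem_evenCoordSum x y, by simp only [map_sub, map_mul]⟩

lemma mem_evenLattice_or_sub_one_mem {x : ℍ[ℝ]} (hx : x ∈ LipschitzLattice) :
    x ∈ evenLattice ∨ x - 1 ∈ evenLattice := by
  obtain ⟨y, rfl⟩ := mem_lipschitzLattice_iff.1 hx
  refine (mem_evenCoordSum_or_sub_one_mem y).imp (fun hy => ?_) (fun hy => ?_) <;>
    exact mem_evenLattice_iff.2 ⟨_, hy, by simp only [map_sub, map_one]⟩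

def hurwitzOmega : ℍ[ℝ] := ⟨1/2, 1/2, 1/2, 1/2⟩

local notation "ω" => hurwitzOmega

lemma IsHurwitz.exists_eq_add_zsmul {x : ℍ[ℝ]} (hx : IsHurwitz x) :
    ∃ y ∈ LipschitzLattice, ∃ t : ℤ, x = y + t • ω := by
  rcases hx with ⟨a, b, c, d, rfl⟩ | ⟨a, b, c, d, rfl⟩
  · exact ⟨_, mem_lipschitzLattice_iff.2 ⟨⟨a, b, c, d⟩, rfl⟩, 0, by rw [zero_smul, add_zero]; rfl⟩
  · exact ⟨_, mem_lipschitzLattice_iff.2 ⟨⟨a, b, c, d⟩, rfl⟩, 1, by rw [one_smul]; rfl⟩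

lemma isHurwitz_of_mem_lipschitzLattice {x : ℍ[ℝ]} (hx : x ∈ LipschitzLattice) : IsHurwitz x := by
  obtain ⟨y, rfl⟩ := mem_lipschitzLattice_iff.1 hx
  exact Or.inl ⟨y.re, y.imI, y.imJ, y.imK, rfl⟩

lemma isHurwitz_hurwitzOmega : IsHurwitz ω :=
  Or.inr ⟨0, 0, 0, 0, by ext <;> simp [hurwitzOmega]⟩

lemma hurwitzOmega_mul_mem_evenLattice {x : ℍ[ℝ]} (hx : x ∈ evenLattice) :
    ω * x ∈ evenLattice ∧ x * ω ∈ evenLattice := by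
  have products : ω * (1 + qi) = qi + qj ∧ (1 + qi) * ω = qi + qk ∧
      ω * (qi + qj) = -(1 - qj) ∧ (qi + qj) * ω = -(1 - qi) ∧
      ω * (qj + qk) = -(1 - qk) ∧ (qj + qk) * ω = -(1 - qj) ∧
      ω * (qj - qk) = -(qi - qj) ∧ (qj - qk) * ω = qi - qk := by
    refine ⟨?_, ?_, ?_, ?_, ?_, ?_, ?_, ?_⟩ <;>
      ext <;> simp [re_mul, imI_mul, imJ_mul, imK_mul] <;> simp [hurwitzOmega, qi, qj, qk] <;> norm_num
  have gen {g : ℍ[ℝ]} (hg : g ∈ ({1 + qi, 1 - qi, 1 + qj, 1 - qj, 1 + qk, 1 - qk,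
      qi + qj, qi - qj, qi + qk, qi - qk, qj + qk, qj - qk} : Set ℍ[ℝ])) : g ∈ evenLattice :=
    AddSubgroup.subset_closure hg
  refine evenLattice_eq_map.le.trans (map_evenCoordSum_le (G := evenLattice.comap
    (AddMonoidHom.mulLeft ω) ⊓ evenLattice.comap (AddMonoidHom.mulRight ω)) ?_ ?_ ?_ ?_) hx <;>
    simp only [AddSubgroup.mem_inf, AddSubgroup.mem_comap, AddMonoidHom.coe_mulLeft,
      AddMonoidHom.coe_mulRight, products, neg_mem_iff] <;>
    exact ⟨gen (by simp), gen (by simp)⟩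

lemma hurwitzOmega_commutator_mem_evenLattice {x : ℍ[ℝ]} (hx : x ∈ LipschitzLattice) :
    ω * x - x * ω ∈ evenLattice := by
  obtain ⟨e, he, hxe⟩ : ∃ e ∈ evenLattice, ω * x - x * ω = ω * e - e * ω := by
    rcases mem_evenLattice_or_sub_one_mem hx with h | h
    exacts [⟨x, h, rfl⟩, ⟨x - 1, h, by noncomm_ring⟩]
  rw [hxe]
  exact sub_mem (hurwitzOmega_mul_mem_evenLattice he).1 (hurwitzOmega_mul_mem_evenLattice he).2

lemma IsHurwitz.mul_mem_evenLattice {a x : ℍ[ℝ]} (ha : IsHurwitz a) (hx : x ∈ evenLattice) :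
    a * x ∈ evenLattice ∧ x * a ∈ evenLattice := by
  obtain ⟨y, hy, t, rfl⟩ := ha.exists_eq_add_zsmul
  have hyx := mul_mem_evenLattice_of_mem_lipschitzLattice hy hx
  have hωx := hurwitzOmega_mul_mem_evenLattice hx
  rw [add_mul, mul_add, smul_mul_assoc, mul_smul_comm]
  exact ⟨add_mem hyx.1 (zsmul_mem hωx.1 t), add_mem hyx.2 (zsmul_mem hωx.2 t)⟩

lemma IsHurwitz.commutator_mem_evenLattice {b c : ℍ[ℝ]} (hb : IsHurwitz b) (hc : IsHurwitz c) :
    b * c - c * b ∈ evenLattice := by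
  obtain ⟨y, hy, t, rfl⟩ := hb.exists_eq_add_zsmul
  obtain ⟨y', hy', t', rfl⟩ := hc.exists_eq_add_zsmul
  have : (y + t • ω) * (y' + t' • ω) - (y' + t' • ω) * (y + t • ω) =
      (y * y' - y' * y) + t • (ω * y' - y' * ω) - t' • (ω * y - y * ω) := by
    simp only [add_mul, mul_add, smul_mul_assoc, mul_smul_comm, smul_sub]
    module
  rw [this]
  exact sub_mem (add_mem (commutator_mem_evenLattice_of_mem_lipschitzLattice hy hy')
    (zsmul_mem (hurwitzOmega_commutator_mem_evenLattice hy') t))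
    (zsmul_mem (hurwitzOmega_commutator_mem_evenLattice hy) t')

lemma commProdLattice_le_evenLattice : commProdLattice ≤ evenLattice := by
  rw [commProdLattice, AddSubgroup.closure_le]
  rintro _ ⟨a, b, c, d, ha, hb, hc, hd, rfl⟩
  exact (hd.mul_mem_evenLattice (ha.mul_mem_evenLattice (hb.commutator_mem_evenLattice hc)).1).2

lemma evenLattice_le_commProdLattice : evenLattice ≤ commProdLattice := by
  have lip {x : ℍ[ℝ]} (hx : x ∈ ({1, qi, qj, qk} : Set ℍ[ℝ])) : IsHurwitz x :=
    isHurwitz_of_mem_lipschitzLattice (AddSubgroup.subset_closure hx)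
  have products : 1 * (ω * qi - qi * ω) * qk = 1 + qi ∧ qk * (ω * qk - qk * ω) * 1 = qi + qj ∧
      qi * (ω * qi - qi * ω) * 1 = qj + qk ∧ 1 * (ω * qi - qi * ω) * 1 = qj - qk := by
    refine ⟨?_, ?_, ?_, ?_⟩ <;>
      ext <;> simp [re_mul, imI_mul, imJ_mul, imK_mul] <;> simp [hurwitzOmega, qi, qj, qk] <;> norm_num
  obtain ⟨h₁, h₂, h₃, h₄⟩ := products
  refine evenLattice_eq_map.le.trans (map_evenCoordSum_le ?_ ?_ ?_ ?_) <;>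
    [rw [← h₁]; rw [← h₂]; rw [← h₃]; rw [← h₄]] <;>
    exact AddSubgroup.subset_closure
      ⟨_, _, _, _, lip (by simp), isHurwitz_hurwitzOmega, lip (by simp), lip (by simp), rfl⟩

lemma evenLattice_le_lipschitzLattice : evenLattice ≤ LipschitzLattice := by
  rw [evenLattice_eq_map, lipschitzLattice_eq_map]
  exact AddSubgroup.map_mono le_top

lemma relIndex_evenLattice_lipschitzLattice : evenLattice.relIndex LipschitzLattice = 2 := by
  rw [evenLattice_eq_map, lipschitzLattice_eq_map,
    AddSubgroup.relIndex_map_map_of_injective _ _ ofIntHom_injective,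
    AddSubgroup.relIndex_top_right, index_evenCoordSum]

/-- The additive subgroup of the Lipschitz quaternions spanned by all products `a[b,c]d`
with `a,b,c,d` Hurwitz equals the integral span of `±1±i, ±1±j, ±1±k, ±i±j, ±i±k, ±j±k`,
and this is an index 2 sublattice of the Lipschitz lattice `L`. -/
theorem commutator_products_index_two :
    commProdLattice = evenLattice ∧
    commProdLattice ≤ LipschitzLattice ∧
    commProdLattice.relIndex LipschitzLattice = 2 := by
  rw [le_antisymm commProdLattice_le_evenLattice evenLattice_le_commProdLattice]
  exact ⟨rfl, evenLattice_le_lipschitzLattice, relIndex_evenLattice_lipschitzLattice⟩
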